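/- With y0,y1,y2,y3 defined as the degree-13 forms of the transformation g_t (y0 = x0*D^3, y1 = x1*D^3 + t*x0^5*D^2, y2 = x2*D^3 + 2t*x1*x0^4*D^2 + t^2*x0^9*D, y3 = x3*D^3 + 3t*x2*x0^4*D^2 + 3t^2*x1*x0^8*D + t^3*x0^13), applying the transformation g_{-t} to (y0,y1,y2,y3) yields (f_{-t})_i(y0,y1,y2,y3) = x_i * D(x0,x1,x2,x3)^42 for each i = 0,1,2,3. -/

import Mathlib

/-!
Writing `u = t * x0^4 / D`, the forms of `g_t` are `D^3` times the coefficients of the cubic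
`F(T0 + u T1, T1)`, where `F = x0 T0^3 + 3 x1 T0^2 T1 + 3 x2 T0 T1^2 + x3 T1^3`. Since the
discriminant is invariant under this shear and has degree 4, it is multiplied by `D^12`, while
`x0` is multiplied by `D^3`; so the parameter of `g_{-t}` at the image point is exactly `-u`, the
two shears cancel, and only the scalar factor `D^42` survives. Clearing denominators, one works
with the homogeneous substitution `(T0, T1) ↦ (b T0 + a T1, b T1)`, `u = a / b`, which makes
sense over any commutative ring.
-/

/-- The discriminant of the binary cubic `x0*T0^3 + 3*x1*T0^2*T1 + 3*x2*T0*T1^2 + x3*T1^3`. -/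
def Dq {R : Type*} [CommRing R] (x0 x1 x2 x3 : R) : R :=
  x0 ^ 2 * x3 ^ 2 - 3 * x1 ^ 2 * x2 ^ 2 - 6 * x0 * x1 * x2 * x3 + 4 * x0 * x2 ^ 3 +
    4 * x3 * x1 ^ 3

/-- The four degree-13 forms `(f_t)_0, (f_t)_1, (f_t)_2, (f_t)_3` of the Cremona
transformation `g_t`. -/
def fT {R : Type*} [CommRing R] (t x0 x1 x2 x3 : R) : Fin 4 → R :=
  ![x0 * Dq x0 x1 x2 x3 ^ 3,
    x1 * Dq x0 x1 x2 x3 ^ 3 + t * x0 ^ 5 * Dq x0 x1 x2 x3 ^ 2,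
    x2 * Dq x0 x1 x2 x3 ^ 3 + 2 * t * x1 * x0 ^ 4 * Dq x0 x1 x2 x3 ^ 2 +
      t ^ 2 * x0 ^ 9 * Dq x0 x1 x2 x3,
    x3 * Dq x0 x1 x2 x3 ^ 3 + 3 * t * x2 * x0 ^ 4 * Dq x0 x1 x2 x3 ^ 2 +
      3 * t ^ 2 * x1 * x0 ^ 8 * Dq x0 x1 x2 x3 + t ^ 3 * x0 ^ 13]

section CubicShear

variable {R : Type*} [CommRing R]

/-- The coefficients `(y0, y1, y2, y3)` of `F(b T0 + a T1, b T1) = y0 T0^3 + 3 y1 T0^2 T1 +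
3 y2 T0 T1^2 + y3 T1^3`, where `F` has coefficients `(x 0, x 1, x 2, x 3)` in the same sense. -/
def cubicShear (a b : R) (x : Fin 4 → R) : Fin 4 → R :=
  ![b ^ 3 * x 0,
    b ^ 3 * x 1 + a * b ^ 2 * x 0,
    b ^ 3 * x 2 + 2 * a * b ^ 2 * x 1 + a ^ 2 * b * x 0,
    b ^ 3 * x 3 + 3 * a * b ^ 2 * x 2 + 3 * a ^ 2 * b * x 1 + a ^ 3 * x 0]

@[simp]
lemma cubicShear_apply_zero (a b : R) (x : Fin 4 → R) : cubicShear a b x 0 = b ^ 3 * x 0 :=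
  rfl

lemma cubicShear_cubicShear (a b a' b' : R) (x : Fin 4 → R) :
    cubicShear a' b' (cubicShear a b x) = cubicShear (a' * b + a * b') (b' * b) x := by
  funext i
  fin_cases i <;>
    simp only [cubicShear, Fin.isValue, Fin.zero_eta, Fin.mk_one, Fin.reduceFinMk,
      Matrix.cons_val_zero, Matrix.cons_val_one, Matrix.cons_val] <;>
    ring

lemma cubicShear_zero_left (c : R) (x : Fin 4 → R) : cubicShear 0 c x = c ^ 3 • x := by
  funext i
  fin_cases i <;> simp [cubicShear]

lemma Dq_cubicShear (a b : R) (x : Fin 4 → R) :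
    Dq (cubicShear a b x 0) (cubicShear a b x 1) (cubicShear a b x 2) (cubicShear a b x 3) =
      b ^ 12 * Dq (x 0) (x 1) (x 2) (x 3) := by
  simp only [Dq, cubicShear, Fin.isValue, Matrix.cons_val_zero, Matrix.cons_val_one,
    Matrix.cons_val]
  ring

lemma fT_eq_cubicShear (t : R) (x : Fin 4 → R) :
    fT t (x 0) (x 1) (x 2) (x 3) =
      cubicShear (t * x 0 ^ 4) (Dq (x 0) (x 1) (x 2) (x 3)) x := by
  funext i
  fin_cases i <;>
    simp only [fT, cubicShear, Fin.isValue, Fin.zero_eta, Fin.mk_one, Fin.reduceFinMk,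
      Matrix.cons_val_zero, Matrix.cons_val_one, Matrix.cons_val] <;>
    ring

end CubicShear

/-- Substituting the forms of `g_t` into the forms of `g_{-t}` gives
`(f_{-t})_i((f_t)_0,…,(f_t)_3) = x_i * D^42`, so `g_{-t} ∘ g_t` is the identity. -/
theorem gt_inverse {R : Type*} [CommRing R] (x0 x1 x2 x3 t : R) :
    ∀ i : Fin 4,
      fT (-t) (fT t x0 x1 x2 x3 0) (fT t x0 x1 x2 x3 1) (fT t x0 x1 x2 x3 2)
          (fT t x0 x1 x2 x3 3) i =
        ![x0, x1, x2, x3] i * Dq x0 x1 x2 x3 ^ 42 := by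
  intro i
  set x : Fin 4 → R := ![x0, x1, x2, x3]
  set D := Dq x0 x1 x2 x3
  have hD : Dq (x 0) (x 1) (x 2) (x 3) = D := rfl
  have hfT : fT t x0 x1 x2 x3 = cubicShear (t * x0 ^ 4) D x := fT_eq_cubicShear t x
  have hshears_cancel : -t * (D ^ 3 * x0) ^ 4 * D + t * x0 ^ 4 * (D ^ 12 * D) = 0 := by ring
  rw [fT_eq_cubicShear (-t), hfT, Dq_cubicShear, hD, cubicShear_cubicShear,
    cubicShear_apply_zero, show x 0 = x0 from rfl, hshears_cancel, cubicShear_zero_left,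
    Pi.smul_apply, smul_eq_mul]
  ring
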